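/- Let R₁ = 2x³ − 3xy² and R₂ = 3x²y − 4y³ in the polynomial ring ℚ[x,y]. Then both x⁵ and x⁴y belong to the ideal generated by R₁ and R₂. -/
import Mathlib

open MvPolynomial

noncomputable section

/-- The ideal (R₁, R₂) ⊆ ℚ[x,y] with R₁ = 2x³ − 3xy² and R₂ = 3x²y − 4y³
(x = X 0, y = X 1). -/
def relIdeal : Ideal (MvPolynomial (Fin 2) ℚ) :=
  Ideal.span {2 * X 0 ^ 3 - 3 * X 0 * X 1 ^ 2, 3 * X 0 ^ 2 * X 1 - 4 * X 1 ^ 3}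

/-- Both x⁵ and x⁴y lie in the ideal (R₁, R₂). -/
theorem x_pow_five_and_x_pow_four_y_mem :
    (X 0 ^ 5 : MvPolynomial (Fin 2) ℚ) ∈ relIdeal ∧
    (X 0 ^ 4 * X 1 : MvPolynomial (Fin 2) ℚ) ∈ relIdeal := by
  constructor
  · have h2 : (2 : MvPolynomial (Fin 2) ℚ) * X 0 ^ 5 ∈ relIdeal := by
      rw [relIdeal, Ideal.mem_span_pair]
      exact ⟨X 0 ^ 2 - 12 * X 1 ^ 2, 9 * (X 0 * X 1), by ring⟩
    have := Ideal.mul_mem_left relIdeal (C (1/2)) h2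
    rwa [show (C (1/2) : MvPolynomial (Fin 2) ℚ) * (2 * X 0 ^ 5) = X 0 ^ 5 by
      rw [show (2 : MvPolynomial (Fin 2) ℚ) = C 2 from (map_ofNat C 2).symm,
        ← mul_assoc, ← C_mul]; norm_num] at this
  · rw [relIdeal, Ideal.mem_span_pair]
    exact ⟨-4 * (X 0 * X 1), 3 * X 0 ^ 2, by ring⟩
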